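/- arXiv:0709.2983 — 4 statements merged into one kernel-verified Lean document; each statement's English description precedes it below -/
import Mathlib

section
/- Suppose $(Y_t)_{t\in\mathbb{Z}}$ is a stationary process of nonnegative random vectors in $\mathbb{R}^n$ with finite expectation satisfying $Y_t = A_t Y_{t-1} + B_t$ a.s., where $(A_t)$ are i.i.d. nonnegative random matrices independent of past $Y$'s and $(B_t)$ are i.i.d. nonnegative random vectors (with the independence structure of the PGARCH state-space representation), and suppose $E[B_0]$ has all coordinates strictly positive in the coordinates generated by the companion structure. Then $\sum_{k=0}^{\infty} (E[A_0])^k E[B_0] < +\infty$ componentwise, and consequently $(E[A_0])^k E[B_0] \to 0$ as $k\to\infty$. -/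
open MeasureTheory ProbabilityTheory Matrix Filter Topology

/-- Matrices carry the product (Borel) measurable structure. -/
instance matrixMeasurableSpace {m n : Type*} {α : Type*} [MeasurableSpace α] :
    MeasurableSpace (Matrix m n α) :=
  (inferInstance : MeasurableSpace (m → n → α))

/-- `prodA A t ω k = A_t(ω) A_{t-1}(ω) ⋯ A_{t-k+1}(ω)` (`k` factors); the empty product is
the identity. -/
noncomputable def prodA {n : ℕ} {Ω : Type*} (A : ℤ → Ω → Matrix (Fin n) (Fin n) ℝ)
    (t : ℤ) (ω : Ω) : ℕ → Matrix (Fin n) (Fin n) ℝ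
  | 0 => 1
  | k + 1 => prodA A t ω k * A (t - k) ω

/-- The (entrywise) mean matrix `Ā = E[A₀]`. -/
noncomputable def matMean {n : ℕ} {Ω : Type*} [MeasurableSpace Ω] (μ : Measure Ω)
    (A0 : Ω → Matrix (Fin n) (Fin n) ℝ) : Matrix (Fin n) (Fin n) ℝ :=
  Matrix.of fun i j => ∫ ω, A0 ω i j ∂μ

/-- The mean vector `B̄ = E[B₀]`. -/
noncomputable def vecMean {n : ℕ} {Ω : Type*} [MeasurableSpace Ω] (μ : Measure Ω)
    (B0 : Ω → Fin n → ℝ) : Fin n → ℝ :=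
  fun i => ∫ ω, B0 ω i ∂μ

/-- `ρ(M) < 1`: every (complex) eigenvalue of the real matrix `M` has modulus `< 1`. -/
def specLtOne {n : ℕ} (M : Matrix (Fin n) (Fin n) ℝ) : Prop :=
  ∀ z ∈ spectrum ℂ (M.map (algebraMap ℝ ℂ)), ‖z‖ < 1

/-!
Unrolling the recursion `N` times and using nonnegativity gives, almost surely,
`∑_{k<N} A_t ⋯ A_{t-k+1} B_{t-k} ≤ Y_t`. Since `A_t` is independent of the pairs `(A_s, B_s)`,
`s < t`, the `k`-th term has mean `Ā^k B̄`, so the partial sums of the nonnegative series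
`∑ Ā^k B̄` are bounded by `E[Y_0]`.
-/

namespace Matrix

variable {m n R : Type*} [Fintype n] [Semiring R] [PartialOrder R] [IsOrderedRing R]

lemma mulVec_nonneg {M : Matrix m n R} {v : n → R} (hM : ∀ i j, 0 ≤ M i j) (hv : 0 ≤ v) :
    0 ≤ M *ᵥ v :=
  fun i => dotProduct_nonneg_of_nonneg (hM i) hv

lemma mulVec_le_mulVec_of_nonneg {M : Matrix m n R} {u v : n → R} (hM : ∀ i j, 0 ≤ M i j)
    (huv : u ≤ v) : M *ᵥ u ≤ M *ᵥ v :=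
  fun i => dotProduct_le_dotProduct_of_nonneg_left huv (hM i)

lemma pow_mulVec_nonneg {M : Matrix n n R} {v : n → R} [DecidableEq n] (hM : ∀ i j, 0 ≤ M i j)
    (hv : 0 ≤ v) (k : ℕ) : 0 ≤ M ^ k *ᵥ v := by
  induction k with
  | zero => simpa using hv
  | succ k ih => simpa only [pow_succ', ← mulVec_mulVec] using mulVec_nonneg hM ih

end Matrix

lemma measurable_entry {m n α : Type*} [MeasurableSpace α] {i : m} {j : n} :
    Measurable fun M : Matrix m n α => M i j :=
  (measurable_pi_apply j).comp (measurable_pi_apply i)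

lemma Measurable.matrix_mulVec {α m n R : Type*} [MeasurableSpace α] [Fintype n]
    [NonUnitalNonAssocSemiring R] [MeasurableSpace R] [MeasurableMul₂ R] [MeasurableAdd₂ R]
    {f : α → Matrix m n R} {g : α → n → R} (hf : Measurable f) (hg : Measurable g) :
    Measurable fun a => f a *ᵥ g a :=
  measurable_pi_iff.2 fun _ => Finset.measurable_sum _ fun j _ =>
    (measurable_entry.comp hf).mul ((measurable_pi_apply j).comp hg)

lemma measurable_biSup_comap {Ω ι β : Type*} [MeasurableSpace β] {f : ι → Ω → β} {S : Set ι}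
    {i : ι} (hi : i ∈ S) : Measurable[⨆ j ∈ S, MeasurableSpace.comap (f j) ‹_›] (f i) :=
  Measurable.of_comap_le (le_iSup₂ (f := fun j (_ : j ∈ S) => MeasurableSpace.comap (f j) _) i hi)

lemma ProbabilityTheory.iIndepFun.indepFun_of_measurable_iSup {Ω ι β γ δ : Type*}
    [MeasurableSpace Ω] {μ : Measure Ω} [MeasurableSpace β] [MeasurableSpace γ]
    [MeasurableSpace δ] {f : ι → Ω → β} (hf : iIndepFun f μ) (hmeas : ∀ i, Measurable (f i))
    {S T : Set ι} (hST : Disjoint S T) {g : Ω → γ} {h : Ω → δ}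
    (hg : Measurable[⨆ i ∈ S, MeasurableSpace.comap (f i) ‹_›] g)
    (hh : Measurable[⨆ i ∈ T, MeasurableSpace.comap (f i) ‹_›] h) :
    IndepFun g h μ :=
  (IndepFun_iff_Indep g h μ).2 <| indep_of_indep_of_le
    (indep_iSup_of_disjoint (fun i => (hmeas i).comap_le) hf.iIndep hST) hg.comap_le hh.comap_le

section RandomRecursion

variable {n : ℕ} {Ω : Type*} (A : ℤ → Ω → Matrix (Fin n) (Fin n) ℝ) (B : ℤ → Ω → Fin n → ℝ)

/-- `seriesTerm A B k t = A_t A_{t-1} ⋯ A_{t-k+1} B_{t-k}`, the `k`-th term of the series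
obtained by unrolling `Y_t = A_t Y_{t-1} + B_t`. -/
def seriesTerm : ℕ → ℤ → Ω → Fin n → ℝ
  | 0, t => B t
  | k + 1, t => fun ω => A t ω *ᵥ seriesTerm k (t - 1) ω

abbrev pastMeasurableSpace (t : ℤ) : MeasurableSpace Ω :=
  ⨆ s ∈ Set.Iic t, MeasurableSpace.comap (fun ω => (A s ω, B s ω)) inferInstance

variable {A B}

lemma sum_range_seriesTerm_le {Y : ℤ → Ω → Fin n → ℝ} {ω : Ω} (hA : ∀ t i j, 0 ≤ A t ω i j)
    (hY : ∀ t, 0 ≤ Y t ω) (hrec : ∀ t, Y t ω = A t ω *ᵥ Y (t - 1) ω + B t ω) (N : ℕ) (t : ℤ) :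
    ∑ k ∈ Finset.range N, seriesTerm A B k t ω ≤ Y t ω := by
  induction N generalizing t with
  | zero => simpa using hY t
  | succ N ih =>
    calc ∑ k ∈ Finset.range (N + 1), seriesTerm A B k t ω
        = A t ω *ᵥ ∑ k ∈ Finset.range N, seriesTerm A B k (t - 1) ω + B t ω := by
          rw [Finset.sum_range_succ', mulVec_sum]
          rfl
      _ ≤ A t ω *ᵥ Y (t - 1) ω + B t ω := by
          gcongr
          exact mulVec_le_mulVec_of_nonneg (hA t) (ih (t - 1))
      _ = Y t ω := (hrec t).symm

lemma pastMeasurableSpace_mono : Monotone (pastMeasurableSpace A B) :=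
  fun _ _ hst => biSup_mono fun _ hs => le_trans hs hst

lemma measurable_pair_past {s t : ℤ} (hst : s ≤ t) :
    Measurable[pastMeasurableSpace A B t] fun ω => (A s ω, B s ω) :=
  measurable_biSup_comap (f := fun s ω => (A s ω, B s ω)) hst

lemma measurable_seriesTerm_past (k : ℕ) (t : ℤ) :
    Measurable[pastMeasurableSpace A B t] (seriesTerm A B k t) := by
  induction k generalizing t with
  | zero => exact measurable_snd.comp (measurable_pair_past le_rfl)
  | succ k ih =>
    exact @Measurable.matrix_mulVec _ _ _ _ (pastMeasurableSpace A B t) _ _ _ _ _ _ _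
      (measurable_fst.comp (measurable_pair_past le_rfl))
      ((ih (t - 1)).mono (pastMeasurableSpace_mono (by omega)) le_rfl)

variable [MeasurableSpace Ω] {μ : Measure Ω}

lemma indepFun_entry_seriesTerm (hmeas : ∀ t, Measurable fun ω => (A t ω, B t ω))
    (hindep : iIndepFun (fun t ω => (A t ω, B t ω)) μ) (k : ℕ) (t : ℤ) (i j l : Fin n) :
    IndepFun (fun ω => A t ω i j) (fun ω => seriesTerm A B k (t - 1) ω l) μ := by
  have hA : Measurable[⨆ s ∈ ({t} : Set ℤ), MeasurableSpace.comap (fun ω => (A s ω, B s ω)) _]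
      fun ω => (A t ω, B t ω) := measurable_biSup_comap (f := fun s ω => (A s ω, B s ω)) rfl
  have hZ := measurable_seriesTerm_past (A := A) (B := B) k (t - 1)
  exact hindep.indepFun_of_measurable_iSup hmeas (Set.disjoint_singleton_left.2 (by simp))
    (measurable_entry.comp (measurable_fst.comp hA)) ((measurable_pi_apply l).comp hZ)

lemma integrable_seriesTerm_and_integral_eq (hmeas : ∀ t, Measurable fun ω => (A t ω, B t ω))
    (hindep : iIndepFun (fun t ω => (A t ω, B t ω)) μ)
    (hident : ∀ t, IdentDistrib (fun ω => (A t ω, B t ω)) (fun ω => (A 0 ω, B 0 ω)) μ μ)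
    (hAint : ∀ i j, Integrable (fun ω => A 0 ω i j) μ)
    (hBint : ∀ i, Integrable (fun ω => B 0 ω i) μ) (k : ℕ) (t : ℤ) (i : Fin n) :
    Integrable (fun ω => seriesTerm A B k t ω i) μ ∧
      ∫ ω, seriesTerm A B k t ω i ∂μ = (matMean μ (A 0) ^ k *ᵥ vecMean μ (B 0)) i := by
  have hAt : ∀ t i j, IdentDistrib (fun ω => A t ω i j) (fun ω => A 0 ω i j) μ μ :=
    fun t _ _ => (hident t).comp (measurable_entry.comp measurable_fst)
  have hBt : ∀ t i, IdentDistrib (fun ω => B t ω i) (fun ω => B 0 ω i) μ μ :=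
    fun t i => (hident t).comp ((measurable_pi_apply i).comp measurable_snd)
  induction k generalizing t i with
  | zero =>
    refine ⟨(hBt t i).integrable_iff.2 (hBint i), ?_⟩
    rw [pow_zero, one_mulVec]
    exact (hBt t i).integral_eq
  | succ k ih =>
    have hindepZ := fun j => indepFun_entry_seriesTerm hmeas hindep k t i j j
    have hexpand : (fun ω => seriesTerm A B (k + 1) t ω i)
        = fun ω => ∑ j, A t ω i j * seriesTerm A B k (t - 1) ω j := rfl
    have hAint' : ∀ j, Integrable (fun ω => A t ω i j) μ :=
      fun j => (hAt t i j).integrable_iff.2 (hAint i j)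
    have hint : ∀ j, Integrable (fun ω => A t ω i j * seriesTerm A B k (t - 1) ω j) μ :=
      fun j => (hindepZ j).integrable_mul (hAint' j) (ih (t - 1) j).1
    refine ⟨hexpand ▸ integrable_finsetSum _ fun j _ => hint j, ?_⟩
    rw [hexpand, integral_finsetSum _ fun j _ => hint j, pow_succ', ← mulVec_mulVec]
    refine Finset.sum_congr rfl fun j _ => ?_
    rw [(hindepZ j).integral_fun_mul_eq_mul_integral (hAint' j).1 (ih (t - 1) j).1.1,
      (hAt t i j).integral_eq, (ih (t - 1) j).2]
    rfl

end RandomRecursion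

theorem stmt4_general {n : ℕ} {Ω : Type*} [MeasurableSpace Ω] (μ : Measure Ω)
    (A : ℤ → Ω → Matrix (Fin n) (Fin n) ℝ) (B : ℤ → Ω → Fin n → ℝ)
    (hmeas : ∀ t, Measurable fun ω => (A t ω, B t ω))
    (hindep : iIndepFun (fun t ω => (A t ω, B t ω)) μ)
    (hident : ∀ t, Measure.map (fun ω => (A t ω, B t ω)) μ
      = Measure.map (fun ω => (A 0 ω, B 0 ω)) μ)
    (hApos : ∀ t, ∀ᵐ ω ∂μ, ∀ i j, 0 ≤ A t ω i j)
    (hAint : ∀ i j, Integrable (fun ω => A 0 ω i j) μ)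
    (hBint : ∀ i, Integrable (fun ω => B 0 ω i) μ)
    (hBmean : ∀ i, 0 < vecMean μ (B 0) i)
    (Y : ℤ → Ω → Fin n → ℝ)
    (hYpos : ∀ t, ∀ᵐ ω ∂μ, ∀ i, 0 ≤ Y t ω i)
    (hYint : ∀ t i, Integrable (fun ω => Y t ω i) μ)
    (hYrec : ∀ t, ∀ᵐ ω ∂μ, Y t ω = A t ω *ᵥ Y (t - 1) ω + B t ω) :
    (∀ i, Summable fun k => (matMean μ (A 0) ^ k *ᵥ vecMean μ (B 0)) i) ∧
    Tendsto (fun k => matMean μ (A 0) ^ k *ᵥ vecMean μ (B 0)) atTop (𝓝 0) := by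
  have hterm := integrable_seriesTerm_and_integral_eq hmeas hindep
    (fun t => ⟨(hmeas t).aemeasurable, (hmeas 0).aemeasurable, hident t⟩) hAint hBint
  have hdom : ∀ᵐ ω ∂μ, ∀ N, ∑ k ∈ Finset.range N, seriesTerm A B k 0 ω ≤ Y 0 ω := by
    filter_upwards [ae_all_iff.2 hApos, ae_all_iff.2 hYpos, ae_all_iff.2 hYrec] with ω hA hY hrec
    exact fun N => sum_range_seriesTerm_le hA hY hrec N 0
  have hbound (N : ℕ) (i : Fin n) :
      ∑ k ∈ Finset.range N, (matMean μ (A 0) ^ k *ᵥ vecMean μ (B 0)) i ≤ ∫ ω, Y 0 ω i ∂μ := by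
    calc ∑ k ∈ Finset.range N, (matMean μ (A 0) ^ k *ᵥ vecMean μ (B 0)) i
        = ∫ ω, ∑ k ∈ Finset.range N, seriesTerm A B k 0 ω i ∂μ := by
          rw [integral_finsetSum _ fun k _ => (hterm k 0 i).1]
          exact Finset.sum_congr rfl fun k _ => (hterm k 0 i).2.symm
      _ ≤ ∫ ω, Y 0 ω i ∂μ :=
          integral_mono_ae (integrable_finsetSum _ fun k _ => (hterm k 0 i).1) (hYint 0 i)
            (hdom.mono fun ω h => by simpa using h N i)
  have hAbar : ∀ i j, 0 ≤ matMean μ (A 0) i j :=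
    fun i j => integral_nonneg_of_ae ((hApos 0).mono fun ω h => h i j)
  have hsum (i : Fin n) : Summable fun k => (matMean μ (A 0) ^ k *ᵥ vecMean μ (B 0)) i :=
    summable_of_sum_range_le (fun k => pow_mulVec_nonneg hAbar (fun j => (hBmean j).le) k i)
      (fun N => hbound N i)
  exact ⟨hsum, tendsto_pi_nhds.2 fun i => (hsum i).tendsto_atTop_zero⟩

/-- If `(Y_t)` is a stationary `L¹` process of nonnegative random vectors
satisfying `Y_t = A_t Y_{t-1} + B_t` a.s. (with i.i.d. nonnegative pairs `(A_t, B_t)` and the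
PGARCH independence structure) and `E[B₀]` has strictly positive coordinates, then
`∑_k (E[A₀])^k E[B₀] < ∞` componentwise, and consequently `(E[A₀])^k E[B₀] → 0`. -/
theorem stmt4 {n : ℕ} {Ω : Type*} [MeasurableSpace Ω] (μ : Measure Ω) [IsProbabilityMeasure μ]
    (A : ℤ → Ω → Matrix (Fin n) (Fin n) ℝ) (B : ℤ → Ω → Fin n → ℝ)
    (hmeas : ∀ t, Measurable fun ω => (A t ω, B t ω))
    (hindep : iIndepFun (fun t ω => (A t ω, B t ω)) μ)
    (hident : ∀ t, Measure.map (fun ω => (A t ω, B t ω)) μ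
      = Measure.map (fun ω => (A 0 ω, B 0 ω)) μ)
    (hApos : ∀ t, ∀ᵐ ω ∂μ, ∀ i j, 0 ≤ A t ω i j)
    (hBpos : ∀ t, ∀ᵐ ω ∂μ, ∀ i, 0 ≤ B t ω i)
    (hAint : ∀ i j, Integrable (fun ω => A 0 ω i j) μ)
    (hBint : ∀ i, Integrable (fun ω => B 0 ω i) μ)
    (hBmean : ∀ i, 0 < vecMean μ (B 0) i)
    (Y : ℤ → Ω → Fin n → ℝ)
    (hYmeas : ∀ t, Measurable (Y t))
    (hYpos : ∀ t, ∀ᵐ ω ∂μ, ∀ i, 0 ≤ Y t ω i)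
    (hYint : ∀ t i, Integrable (fun ω => Y t ω i) μ)
    (hYstat : ∀ t, Measure.map (Y t) μ = Measure.map (Y 0) μ)
    (hYrec : ∀ t, ∀ᵐ ω ∂μ, Y t ω = A t ω *ᵥ Y (t - 1) ω + B t ω) :
    (∀ i, Summable fun k => (matMean μ (A 0) ^ k *ᵥ vecMean μ (B 0)) i) ∧
    Tendsto (fun k => matMean μ (A 0) ^ k *ᵥ vecMean μ (B 0)) atTop (𝓝 0) :=
  stmt4_general μ A B hmeas hindep hident hApos hAint hBint hBmean Y hYpos hYint hYrec
end

section
/- (Uniqueness) Let $(A_t)_{t\in\mathbb{Z}}$ be i.i.d. random nonnegative $n\times n$ matrices with $\rho(E[A_0]) < 1$. If $(Y_t)$ and $(Z_t)$ are two stationary $L^1$ processes of nonnegative random vectors both satisfying $X_t = A_t X_{t-1} + B_t$ a.s. (with the same $(A_t)$, $(B_t)$ and appropriate independence of $A_t$ from past states), then $E|Y_t - Z_t| = 0$, i.e. $Y_t = Z_t$ almost surely for every $t$. -/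
open MeasureTheory ProbabilityTheory Matrix Filter Topology

/-!
The difference `W_t = Y_t - Z_t` solves the homogeneous recursion `W_t = A_t W_{t-1}`, hence
`W_t = A_t A_{t-1} ⋯ A_{t-k+1} W_{t-k}` for every `k`. The matrices being nonnegative,
`|W_t| ≤ A_t ⋯ A_{t-k+1} |W_{t-k}|` componentwise; taking expectations, independence of the
product from `W_{t-k}` and stationarity give `E|W_t| ≤ E[A₀]ᵏ E|W₀|`. Finally `E[A₀]ᵏ → 0` by
Gelfand's formula, because `ρ(E[A₀]) < 1`.
-/

theorem prodA_congr {n : ℕ} {Ω Ω' : Type*} {A : ℤ → Ω → Matrix (Fin n) (Fin n) ℝ}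
    {A' : ℤ → Ω' → Matrix (Fin n) (Fin n) ℝ} {t : ℤ} {ω : Ω} {ω' : Ω'} {k : ℕ}
    (h : ∀ j < k, A (t - j) ω = A' (t - j) ω') :
    prodA A t ω k = prodA A' t ω' k := by
  induction k with
  | zero => rfl
  | succ k ih => rw [prodA, prodA, ih fun j hj => h j (by omega), h k k.lt_succ_self]

section Products

variable {Ω : Type*} [MeasurableSpace Ω]

theorem measurable_matrix_apply {m : Type*} (i j : m) :
    Measurable fun M : Matrix m m ℝ => M i j :=
  (measurable_pi_apply i).eval

theorem Measurable.matrix_mul {m : Type*} [Fintype m] {f g : Ω → Matrix m m ℝ}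
    (hf : Measurable f) (hg : Measurable g) : Measurable fun ω => f ω * g ω :=
  measurable_pi_lambda _ fun i => measurable_pi_lambda _ fun j =>
    Finset.measurable_sum _ fun l _ =>
      ((measurable_matrix_apply i l).comp hf).mul ((measurable_matrix_apply l j).comp hg)

variable {n : ℕ} {A : ℤ → Ω → Matrix (Fin n) (Fin n) ℝ}

theorem measurable_prodA (hA : ∀ t, Measurable (A t)) (t : ℤ) (k : ℕ) :
    Measurable fun ω => prodA A t ω k := by
  induction k with
  | zero => exact measurable_const
  | succ k ih => exact ih.matrix_mul (hA _)

theorem indepFun_prodA {B : ℤ → Ω → Fin n → ℝ} {μ : Measure Ω}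
    (hmeas : ∀ t, Measurable fun ω => (A t ω, B t ω))
    (hindep : iIndepFun (fun t ω => (A t ω, B t ω)) μ) (t : ℤ) (k : ℕ) :
    IndepFun (fun ω => prodA A t ω k) (fun ω => (A (t - k) ω, B (t - k) ω)) μ := by
  classical
  set S := Finset.Ioc (t - k) t
  have hST : Disjoint S {t - k} := by simp [S]
  -- `prodA` only reads the factors indexed by `S`, so it factors through the restriction to `S`.
  let φ (v : S → Matrix (Fin n) (Fin n) ℝ × (Fin n → ℝ)) : Matrix (Fin n) (Fin n) ℝ :=
    prodA (fun s v => if h : s ∈ S then (v ⟨s, h⟩).1 else 0) t v k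
  have hφ : Measurable φ := by
    refine measurable_prodA (fun s => ?_) t k
    by_cases h : s ∈ S
    · simpa only [dif_pos h] using (measurable_pi_apply _).fst
    · simp only [dif_neg h, measurable_const]
  refine ((hindep.indepFun_finset S {t - k} hST hmeas).comp hφ
    (measurable_pi_apply ⟨t - k, Finset.mem_singleton_self _⟩)).congr ?_ .rfl
  refine .of_forall fun ω => prodA_congr fun j hj => ?_
  have hj : t - j ∈ S := by simp only [S, Finset.mem_Ioc]; omega
  simp [hj]

end Products

section Moments

variable {Ω : Type*} [MeasurableSpace Ω] {μ : Measure Ω} {n : ℕ}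

theorem integrable_mulVec_apply_of_indepFun {P : Ω → Matrix (Fin n) (Fin n) ℝ}
    {V : Ω → Fin n → ℝ} (hPV : IndepFun P V μ) (hP : ∀ i j, Integrable (fun ω => P ω i j) μ)
    (hV : ∀ j, Integrable (fun ω => V ω j) μ) (i : Fin n) :
    Integrable (fun ω => (P ω *ᵥ V ω) i) μ := by
  have hint (l : Fin n) : Integrable (fun ω => P ω i l * V ω l) μ :=
    (hPV.comp (measurable_matrix_apply i l) (measurable_pi_apply l)).integrable_mul
      (hP i l) (hV l)
  simp only [Matrix.mulVec, dotProduct]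
  exact integrable_finsetSum _ fun l _ => hint l

theorem integral_mulVec_apply_of_indepFun {P : Ω → Matrix (Fin n) (Fin n) ℝ}
    {V : Ω → Fin n → ℝ} (hPV : IndepFun P V μ) (hP : ∀ i j, Integrable (fun ω => P ω i j) μ)
    (hV : ∀ j, Integrable (fun ω => V ω j) μ) (i : Fin n) :
    ∫ ω, (P ω *ᵥ V ω) i ∂μ = (matMean μ P *ᵥ vecMean μ V) i := by
  have hPV_apply (l : Fin n) : IndepFun (fun ω => P ω i l) (fun ω => V ω l) μ :=
    hPV.comp (measurable_matrix_apply i l) (measurable_pi_apply l)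
  have hint (l : Fin n) : Integrable (fun ω => P ω i l * V ω l) μ :=
    (hPV_apply l).integrable_mul (hP i l) (hV l)
  simp only [Matrix.mulVec, dotProduct, matMean, vecMean, Matrix.of_apply]
  rw [integral_finsetSum _ fun l _ => hint l]
  exact Finset.sum_congr rfl fun l _ => (hPV_apply l).integral_mul_eq_mul_integral
    (hP i l).aestronglyMeasurable (hV l).aestronglyMeasurable

theorem ProbabilityTheory.IndepFun.matrix_col_right {P Q : Ω → Matrix (Fin n) (Fin n) ℝ}
    (hPQ : IndepFun P Q μ) (j : Fin n) : IndepFun P (fun ω l => Q ω l j) μ :=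
  hPQ.comp measurable_id (measurable_pi_lambda _ fun l => measurable_matrix_apply l j)

theorem integrable_mul_apply_of_indepFun {P Q : Ω → Matrix (Fin n) (Fin n) ℝ}
    (hPQ : IndepFun P Q μ) (hP : ∀ i j, Integrable (fun ω => P ω i j) μ)
    (hQ : ∀ i j, Integrable (fun ω => Q ω i j) μ) (i j : Fin n) :
    Integrable (fun ω => (P ω * Q ω) i j) μ :=
  integrable_mulVec_apply_of_indepFun (hPQ.matrix_col_right j) hP (fun l => hQ l j) i

theorem matMean_mul_of_indepFun {P Q : Ω → Matrix (Fin n) (Fin n) ℝ}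
    (hPQ : IndepFun P Q μ) (hP : ∀ i j, Integrable (fun ω => P ω i j) μ)
    (hQ : ∀ i j, Integrable (fun ω => Q ω i j) μ) :
    matMean μ (fun ω => P ω * Q ω) = matMean μ P * matMean μ Q := by
  ext i j
  exact integral_mulVec_apply_of_indepFun (hPQ.matrix_col_right j) hP (fun l => hQ l j) i

variable {A : ℤ → Ω → Matrix (Fin n) (Fin n) ℝ} {B : ℤ → Ω → Fin n → ℝ}

theorem identDistrib_apply_of_map_eq (hmeas : ∀ t, Measurable fun ω => (A t ω, B t ω))
    (hident : ∀ t, Measure.map (fun ω => (A t ω, B t ω)) μ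
      = Measure.map (fun ω => (A 0 ω, B 0 ω)) μ) (t : ℤ) (i j : Fin n) :
    IdentDistrib (fun ω => A t ω i j) (fun ω => A 0 ω i j) μ μ :=
  (⟨(hmeas t).aemeasurable, (hmeas 0).aemeasurable, hident t⟩ : IdentDistrib _ _ μ μ).comp
    ((measurable_matrix_apply i j).comp measurable_fst)

theorem integrable_prodA_apply [IsProbabilityMeasure μ]
    (hmeas : ∀ t, Measurable fun ω => (A t ω, B t ω))
    (hindep : iIndepFun (fun t ω => (A t ω, B t ω)) μ)
    (hident : ∀ t, Measure.map (fun ω => (A t ω, B t ω)) μ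
      = Measure.map (fun ω => (A 0 ω, B 0 ω)) μ)
    (hAint : ∀ i j, Integrable (fun ω => A 0 ω i j) μ) (t : ℤ) (k : ℕ) (i j : Fin n) :
    Integrable (fun ω => prodA A t ω k i j) μ := by
  induction k generalizing i j with
  | zero => exact integrable_const _
  | succ k ih =>
    exact integrable_mul_apply_of_indepFun
      ((indepFun_prodA hmeas hindep t k).comp measurable_id measurable_fst) ih
      (fun i j => (identDistrib_apply_of_map_eq hmeas hident _ i j).integrable_iff.2 (hAint i j))
      i j

theorem matMean_prodA [IsProbabilityMeasure μ]
    (hmeas : ∀ t, Measurable fun ω => (A t ω, B t ω))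
    (hindep : iIndepFun (fun t ω => (A t ω, B t ω)) μ)
    (hident : ∀ t, Measure.map (fun ω => (A t ω, B t ω)) μ
      = Measure.map (fun ω => (A 0 ω, B 0 ω)) μ)
    (hAint : ∀ i j, Integrable (fun ω => A 0 ω i j) μ) (t : ℤ) (k : ℕ) :
    matMean μ (fun ω => prodA A t ω k) = matMean μ (A 0) ^ k := by
  induction k with
  | zero => ext i j; simp [matMean, prodA]
  | succ k ih =>
    have hmean : matMean μ (A (t - k)) = matMean μ (A 0) := by
      ext i j
      exact (identDistrib_apply_of_map_eq hmeas hident _ i j).integral_eq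
    rw [pow_succ, ← ih, ← hmean]
    exact matMean_mul_of_indepFun
      ((indepFun_prodA hmeas hindep t k).comp measurable_id measurable_fst)
      (integrable_prodA_apply hmeas hindep hident hAint t k)
      (fun i j => (identDistrib_apply_of_map_eq hmeas hident _ i j).integrable_iff.2 (hAint i j))

end Moments

theorem tendsto_pow_atTop_nhds_zero_of_spectralRadius_lt_one {A : Type*} [NormedRing A]
    [NormedAlgebra ℂ A] [CompleteSpace A] {a : A} (ha : spectralRadius ℂ a < 1) :
    Tendsto (fun k : ℕ => a ^ k) atTop (𝓝 0) := by
  obtain ⟨r, har, hr1⟩ := ENNReal.lt_iff_exists_nnreal_btwn.mp ha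
  have hbound : ∀ᶠ k : ℕ in atTop, ‖a ^ k‖ ≤ (r : ℝ) ^ k := by
    filter_upwards [(spectrum.pow_nnnorm_pow_one_div_tendsto_nhds_spectralRadius
      a).eventually_lt_const har, eventually_ge_atTop 1] with k hk hk1
    rw [one_div, ENNReal.rpow_inv_lt_iff (by exact_mod_cast hk1), ENNReal.rpow_natCast,
      ← ENNReal.coe_pow, ENNReal.coe_lt_coe] at hk
    exact_mod_cast hk.le
  exact squeeze_zero_norm' hbound
    (tendsto_pow_atTop_nhds_zero_of_lt_one r.coe_nonneg (by exact_mod_cast hr1))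

section SpecLtOne

attribute [local instance] Matrix.linftyOpNormedRing Matrix.linftyOpNormedAlgebra

theorem tendsto_pow_of_specLtOne {n : ℕ} {M : Matrix (Fin n) (Fin n) ℝ} (hM : specLtOne M) :
    Tendsto (fun k : ℕ => M ^ k) atTop (𝓝 0) := by
  rcases isEmpty_or_nonempty (Fin n) with hn | hn
  · exact tendsto_const_nhds.congr fun k => Subsingleton.elim _ _
  set N := M.map (algebraMap ℝ ℂ) with hNdef
  have : CompleteSpace (Matrix (Fin n) (Fin n) ℂ) := FiniteDimensional.complete ℂ _
  have hN : spectralRadius ℂ N < 1 := by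
    simpa using spectrum.spectralRadius_lt_of_forall_lt N (r := 1) fun z hz => by
      simpa [← norm_toNNReal] using hM z hz
  have hre (k : ℕ) : (N ^ k).map Complex.re = M ^ k := by
    rw [hNdef, ← RingHom.mapMatrix_apply, ← map_pow]
    ext i j
    simp
  have hlim := ((continuous_id.matrix_map Complex.continuous_re).tendsto 0).comp
    (tendsto_pow_atTop_nhds_zero_of_spectralRadius_lt_one hN)
  simp only [id, Matrix.map_zero _ Complex.zero_re] at hlim
  exact hlim.congr hre

end SpecLtOne

theorem abs_mulVec_apply_le {m : Type*} [Fintype m] {P : Matrix m m ℝ} (hP : ∀ i j, 0 ≤ P i j)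
    (v : m → ℝ) (i : m) : |(P *ᵥ v) i| ≤ (P *ᵥ fun j => |v j|) i := by
  simp only [Matrix.mulVec, dotProduct]
  refine (Finset.abs_sum_le_sum_abs _ _).trans (Finset.sum_le_sum fun j _ => ?_)
  rw [abs_mul, abs_of_nonneg (hP i j)]

section Recursion

variable {Ω : Type*} [MeasurableSpace Ω] {μ : Measure Ω} {n : ℕ}
  {A : ℤ → Ω → Matrix (Fin n) (Fin n) ℝ} {B : ℤ → Ω → Fin n → ℝ} {X : ℤ → Ω → Fin n → ℝ}

theorem ae_eq_prodA_mulVec (hXrec : ∀ t, ∀ᵐ ω ∂μ, X t ω = A t ω *ᵥ X (t - 1) ω)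
    (t : ℤ) (k : ℕ) : ∀ᵐ ω ∂μ, X t ω = prodA A t ω k *ᵥ X (t - k) ω := by
  induction k with
  | zero => exact .of_forall fun ω => by simp [prodA]
  | succ k ih =>
    filter_upwards [ih, hXrec (t - k)] with ω hk hstep
    rw [hk, hstep, Matrix.mulVec_mulVec, prodA, Nat.cast_succ, sub_sub]

theorem ae_prodA_nonneg (hApos : ∀ t, ∀ᵐ ω ∂μ, ∀ i j, 0 ≤ A t ω i j) (t : ℤ) (k : ℕ) :
    ∀ᵐ ω ∂μ, ∀ i j, 0 ≤ prodA A t ω k i j := by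
  induction k with
  | zero => exact .of_forall fun ω i j => Matrix.zero_le_one_elem i j
  | succ k ih =>
    filter_upwards [ih, hApos (t - k)] with ω hP hA i j
    rw [prodA, Matrix.mul_apply]
    exact Finset.sum_nonneg fun l _ => mul_nonneg (hP i l) (hA l j)

theorem integral_abs_le_pow_mulVec [IsProbabilityMeasure μ]
    (hmeas : ∀ t, Measurable fun ω => (A t ω, B t ω))
    (hindep : iIndepFun (fun t ω => (A t ω, B t ω)) μ)
    (hident : ∀ t, Measure.map (fun ω => (A t ω, B t ω)) μ
      = Measure.map (fun ω => (A 0 ω, B 0 ω)) μ)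
    (hApos : ∀ t, ∀ᵐ ω ∂μ, ∀ i j, 0 ≤ A t ω i j)
    (hAint : ∀ i j, Integrable (fun ω => A 0 ω i j) μ)
    (hXrec : ∀ t, ∀ᵐ ω ∂μ, X t ω = A t ω *ᵥ X (t - 1) ω)
    (hXint : ∀ t i, Integrable (fun ω => X t ω i) μ)
    (hXstat : ∀ t, IdentDistrib (X t) (X 0) μ μ)
    (hXindep : ∀ (t : ℤ) (k : ℕ), IndepFun (fun ω => prodA A t ω k) (X (t - k)) μ)
    (t : ℤ) (k : ℕ) (i : Fin n) :
    ∫ ω, |X t ω i| ∂μ ≤ (matMean μ (A 0) ^ k *ᵥ vecMean μ fun ω j => |X 0 ω j|) i := by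
  set V := fun ω j => |X (t - k) ω j|
  have hPV : IndepFun (fun ω => prodA A t ω k) V μ :=
    (hXindep t k).comp measurable_id (measurable_pi_lambda _ fun j => (measurable_pi_apply j).abs)
  have hP := integrable_prodA_apply hmeas hindep hident hAint t k
  have hV (j : Fin n) : Integrable (fun ω => V ω j) μ := (hXint _ j).abs
  have hbound : ∀ᵐ ω ∂μ, |X t ω i| ≤ (prodA A t ω k *ᵥ V ω) i := by
    filter_upwards [ae_eq_prodA_mulVec hXrec t k, ae_prodA_nonneg hApos t k] with ω hX hnonneg
    rw [hX]
    exact abs_mulVec_apply_le hnonneg _ i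
  have hVmean : vecMean μ V = vecMean μ fun ω j => |X 0 ω j| := by
    ext j
    exact ((hXstat _).comp ((measurable_pi_apply j).abs)).integral_eq
  calc ∫ ω, |X t ω i| ∂μ
      ≤ ∫ ω, (prodA A t ω k *ᵥ V ω) i ∂μ :=
        integral_mono_ae (hXint t i).abs (integrable_mulVec_apply_of_indepFun hPV hP hV i) hbound
    _ = _ := by
        rw [integral_mulVec_apply_of_indepFun hPV hP hV i,
          matMean_prodA hmeas hindep hident hAint, hVmean]

theorem ae_eq_zero_of_stationary_of_recursion [IsProbabilityMeasure μ]
    (hmeas : ∀ t, Measurable fun ω => (A t ω, B t ω))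
    (hindep : iIndepFun (fun t ω => (A t ω, B t ω)) μ)
    (hident : ∀ t, Measure.map (fun ω => (A t ω, B t ω)) μ
      = Measure.map (fun ω => (A 0 ω, B 0 ω)) μ)
    (hApos : ∀ t, ∀ᵐ ω ∂μ, ∀ i j, 0 ≤ A t ω i j)
    (hAint : ∀ i j, Integrable (fun ω => A 0 ω i j) μ)
    (hspec : specLtOne (matMean μ (A 0)))
    (hXrec : ∀ t, ∀ᵐ ω ∂μ, X t ω = A t ω *ᵥ X (t - 1) ω)
    (hXint : ∀ t i, Integrable (fun ω => X t ω i) μ)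
    (hXstat : ∀ t, IdentDistrib (X t) (X 0) μ μ)
    (hXindep : ∀ (t : ℤ) (k : ℕ), IndepFun (fun ω => prodA A t ω k) (X (t - k)) μ)
    (t : ℤ) : ∀ᵐ ω ∂μ, X t ω = 0 := by
  have hlim : Tendsto (fun k => matMean μ (A 0) ^ k *ᵥ vecMean μ fun ω j => |X 0 ω j|)
      atTop (𝓝 0) := by
    have hcont : Continuous fun M : Matrix (Fin n) (Fin n) ℝ =>
        M *ᵥ vecMean μ fun ω j => |X 0 ω j| :=
      continuous_id.matrix_mulVec continuous_const
    simpa [Function.comp_def] using (hcont.tendsto 0).comp (tendsto_pow_of_specLtOne hspec)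
  have hzero (i : Fin n) : ∫ ω, |X t ω i| ∂μ = 0 :=
    le_antisymm (ge_of_tendsto' (tendsto_pi_nhds.1 hlim i) fun k =>
        integral_abs_le_pow_mulVec hmeas hindep hident hApos hAint hXrec hXint hXstat hXindep t k i)
      (integral_nonneg fun ω => abs_nonneg _)
  have hae (i : Fin n) : ∀ᵐ ω ∂μ, X t ω i = 0 := by
    filter_upwards [(integral_eq_zero_iff_of_nonneg (fun ω => abs_nonneg _)
      (hXint t i).abs).1 (hzero i)] with ω hω
    exact abs_eq_zero.1 hω
  filter_upwards [ae_all_iff.2 hae] with ω hω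
  exact funext hω

end Recursion

theorem stmt6_general {n : ℕ} {Ω : Type*} [MeasurableSpace Ω] (μ : Measure Ω) [IsProbabilityMeasure μ]
    (A : ℤ → Ω → Matrix (Fin n) (Fin n) ℝ) (B : ℤ → Ω → Fin n → ℝ)
    (hmeas : ∀ t, Measurable fun ω => (A t ω, B t ω))
    (hindep : iIndepFun (fun t ω => (A t ω, B t ω)) μ)
    (hident : ∀ t, Measure.map (fun ω => (A t ω, B t ω)) μ
      = Measure.map (fun ω => (A 0 ω, B 0 ω)) μ)
    (hApos : ∀ t, ∀ᵐ ω ∂μ, ∀ i j, 0 ≤ A t ω i j)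
    (hAint : ∀ i j, Integrable (fun ω => A 0 ω i j) μ)
    (hspec : specLtOne (matMean μ (A 0)))
    (Y Z : ℤ → Ω → Fin n → ℝ)
    (hYmeas : ∀ t, Measurable (Y t)) (hZmeas : ∀ t, Measurable (Z t))
    (hYint : ∀ t i, Integrable (fun ω => Y t ω i) μ)
    (hZint : ∀ t i, Integrable (fun ω => Z t ω i) μ)
    (hstat : ∀ t, Measure.map (fun ω => (Y t ω, Z t ω)) μ
      = Measure.map (fun ω => (Y 0 ω, Z 0 ω)) μ)
    (hYrec : ∀ t, ∀ᵐ ω ∂μ, Y t ω = A t ω *ᵥ Y (t - 1) ω + B t ω)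
    (hZrec : ∀ t, ∀ᵐ ω ∂μ, Z t ω = A t ω *ᵥ Z (t - 1) ω + B t ω)
    (hpast : ∀ (t : ℤ) (k : ℕ), IndepFun (fun ω => prodA A t ω k)
      (fun ω => (Y (t - k) ω, Z (t - k) ω)) μ) :
    ∀ t : ℤ, ∀ᵐ ω ∂μ, Y t ω = Z t ω := by
  intro t
  have hsub : Measurable fun p : (Fin n → ℝ) × (Fin n → ℝ) => p.1 - p.2 :=
    measurable_fst.sub measurable_snd
  have hWrec (s : ℤ) : ∀ᵐ ω ∂μ, Y s ω - Z s ω = A s ω *ᵥ (Y (s - 1) ω - Z (s - 1) ω) := by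
    filter_upwards [hYrec s, hZrec s] with ω hY hZ
    rw [hY, hZ, Matrix.mulVec_sub, add_sub_add_right_eq_sub]
  have hWstat (s : ℤ) : IdentDistrib (fun ω => Y s ω - Z s ω) (fun ω => Y 0 ω - Z 0 ω) μ μ :=
    (⟨((hYmeas s).prodMk (hZmeas s)).aemeasurable, ((hYmeas 0).prodMk (hZmeas 0)).aemeasurable,
      hstat s⟩ : IdentDistrib _ _ μ μ).comp hsub
  filter_upwards [ae_eq_zero_of_stationary_of_recursion (X := fun s ω => Y s ω - Z s ω) hmeas
    hindep hident hApos hAint hspec hWrec (fun s i => (hYint s i).sub (hZint s i)) hWstat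
    (fun s k => (hpast s k).comp measurable_id hsub) t] with ω hω
  exact sub_eq_zero.1 hω

/-- **Uniqueness.** If `ρ(E[A₀]) < 1` and `(Y_t)`, `(Z_t)` are two (jointly)
stationary `L¹` processes of nonnegative random vectors satisfying the same recursion
`X_t = A_t X_{t-1} + B_t` a.s., with the products of the `A`'s independent of the past
states, then `Y_t = Z_t` almost surely for every `t`. -/
theorem stmt6 {n : ℕ} {Ω : Type*} [MeasurableSpace Ω] (μ : Measure Ω) [IsProbabilityMeasure μ]
    (A : ℤ → Ω → Matrix (Fin n) (Fin n) ℝ) (B : ℤ → Ω → Fin n → ℝ)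
    (hmeas : ∀ t, Measurable fun ω => (A t ω, B t ω))
    (hindep : iIndepFun (fun t ω => (A t ω, B t ω)) μ)
    (hident : ∀ t, Measure.map (fun ω => (A t ω, B t ω)) μ
      = Measure.map (fun ω => (A 0 ω, B 0 ω)) μ)
    (hApos : ∀ t, ∀ᵐ ω ∂μ, ∀ i j, 0 ≤ A t ω i j)
    (hAint : ∀ i j, Integrable (fun ω => A 0 ω i j) μ)
    (hspec : specLtOne (matMean μ (A 0)))
    (Y Z : ℤ → Ω → Fin n → ℝ)
    (hYmeas : ∀ t, Measurable (Y t)) (hZmeas : ∀ t, Measurable (Z t))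
    (hYpos : ∀ t, ∀ᵐ ω ∂μ, ∀ i, 0 ≤ Y t ω i)
    (hZpos : ∀ t, ∀ᵐ ω ∂μ, ∀ i, 0 ≤ Z t ω i)
    (hYint : ∀ t i, Integrable (fun ω => Y t ω i) μ)
    (hZint : ∀ t i, Integrable (fun ω => Z t ω i) μ)
    (hstat : ∀ t, Measure.map (fun ω => (Y t ω, Z t ω)) μ
      = Measure.map (fun ω => (Y 0 ω, Z 0 ω)) μ)
    (hYrec : ∀ t, ∀ᵐ ω ∂μ, Y t ω = A t ω *ᵥ Y (t - 1) ω + B t ω)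
    (hZrec : ∀ t, ∀ᵐ ω ∂μ, Z t ω = A t ω *ᵥ Z (t - 1) ω + B t ω)
    (hpast : ∀ (t : ℤ) (k : ℕ), IndepFun (fun ω => prodA A t ω k)
      (fun ω => (Y (t - k) ω, Z (t - k) ω)) μ) :
    ∀ t : ℤ, ∀ᵐ ω ∂μ, Y t ω = Z t ω :=
  stmt6_general μ A B hmeas hindep hident hApos hAint hspec Y Z hYmeas hZmeas hYint hZint hstat
    hYrec hZrec hpast
end

section
/- (Strict stationarity of PGARCH(1,1)) Let $(\eta_t)_{t\in\mathbb{Z}}$ be i.i.d. nonnegative random variables with $E[\eta_0]=1$, and let $\alpha_1(v)\geq 0$, $\beta_1(v)\geq 0$ for $v=1,\dots,s$ (not all zero at any season, and $\log(\eta\alpha_1(v)+\beta_1(v))$ integrable). If $\sum_{v=1}^{s} E[\log(\eta_0\,\alpha_1(v) + \beta_1(v))] < 0$, then the top Lyapunov exponent of the sequence of period-products of the companion matrices $\phi_v(\eta) = (\eta,1)^\top(\alpha_1(v),\beta_1(v))$ is strictly negative; equivalently, $\frac{1}{t}\log\|\prod_{i=1}^{t}\Phi(\underline\eta_{t-i})\|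 \to \gamma < 0$ almost surely, where $\Phi(\underline\eta) = \phi_s(\eta_s)\cdots\phi_1(\eta_1)$ for $\underline\eta = (\eta_1,\dots,\eta_s)$. -/
/-!
The companion matrices have rank one, `φ_v(x) = (x, 1)ᵀ (α v, β v)`, so their products
telescope: `φ_v(x) φ_w(y) = (y α v + β v) φ_w(x)`. Hence `‖Φ_t‖` is the product of the scalars
`e_m α_{m+1} + β_{m+1}` over `m < ts - 1`, times a factor depending on the last innovation only.
After taking logarithms, the strong law of large numbers along each of the `s` seasonal
subsequences gives `(1/t) ∑_{m < ts} log (e_m α_{m+1} + β_{m+1}) → ∑_v E log (e₀ α v + β v)`,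
and the boundary term is `o(t)`, since the terms of a sequence with convergent Cesàro means
are `o(n)`.
-/

open MeasureTheory ProbabilityTheory Matrix Filter Topology

attribute [local instance] Matrix.linftyOpNormedAddCommGroup Matrix.linftyOpNormedRing

/-- The one-step PGARCH(1,1) companion matrix
`φ_v(x) = (x, 1)ᵀ (α₁(v), β₁(v)) = ![![α₁(v) x, β₁(v) x], ![α₁(v), β₁(v)]]`. -/
noncomputable def phiM (α β : ℕ → ℝ) (v : ℕ) (x : ℝ) : Matrix (Fin 2) (Fin 2) ℝ :=
  !![α v * x, β v * x; α v, β v]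

/-- The product `Φ(η̄_{t-1}) Φ(η̄_{t-2}) ⋯ Φ(η̄_0)` of the period-products
`Φ(η̄_k) = φ_{s-1}(e_{ks+s-1}) ⋯ φ_0(e_{ks})` (seasons `0`-indexed, innovations `e_m` for
`m ∈ ℕ`, season of `m` being `m % s`): the ordered product of `φ_{m % s}(e_m(ω))` over
`m = ts - 1, …, 1, 0` (highest index on the left). -/
noncomputable def PhiProd {Ω : Type*} (s : ℕ) (α β : ℕ → ℝ) (e : ℕ → Ω → ℝ)
    (t : ℕ) (ω : Ω) : Matrix (Fin 2) (Fin 2) ℝ :=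
  (((List.range (t * s)).reverse).map fun m => phiM α β (m % s) (e m ω)).prod

namespace PGARCH

lemma sum_range_mod_add_one {M : Type*} [AddCommGroup M] (f : ℕ → M) (s : ℕ) :
    ∑ v ∈ Finset.range s, f ((v + 1) % s) = ∑ v ∈ Finset.range s, f v := by
  have hshift := (Finset.sum_range_succ' (fun v => f (v % s)) s).symm.trans
    (Finset.sum_range_succ (fun v => f (v % s)) s)
  rw [Nat.mod_self, Nat.zero_mod, add_left_inj] at hshift
  rw [hshift]
  exact Finset.sum_congr rfl fun v hv => by rw [Nat.mod_eq_of_lt (Finset.mem_range.1 hv)]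

lemma sum_range_mul_eq_sum_sum {M : Type*} [AddCommMonoid M] (f : ℕ → M) (s t : ℕ) :
    ∑ m ∈ Finset.range (t * s), f m
      = ∑ v ∈ Finset.range s, ∑ k ∈ Finset.range t, f (k * s + v) := by
  induction t with
  | zero => simp
  | succ t ih =>
    rw [add_mul, one_mul, Finset.sum_range_add, ih, ← Finset.sum_add_distrib]
    exact Finset.sum_congr rfl fun v _ => (Finset.sum_range_succ _ _).symm

lemma tendsto_div_add_one_of_tendsto_sum_div {a : ℕ → ℝ} {L : ℝ}
    (h : Tendsto (fun n : ℕ => (∑ k ∈ Finset.range n, a k) / n) atTop (𝓝 L)) :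
    Tendsto (fun n : ℕ => a n / (n + 1)) atTop (𝓝 0) := by
  have hlim := ((tendsto_add_atTop_iff_nat 1).2 h).sub
    (h.mul (tendsto_natCast_div_add_atTop (1 : ℝ)))
  rw [mul_one, sub_self] at hlim
  refine hlim.congr' ?_
  filter_upwards [eventually_ne_atTop 0] with n hn
  have hn' : (n : ℝ) ≠ 0 := Nat.cast_ne_zero.2 hn
  rw [Finset.sum_range_succ]
  push_cast
  field_simp
  ring

section IID

variable {Ω E : Type*} [MeasurableSpace Ω] [MeasurableSpace E] {μ : Measure Ω}
  {e : ℕ → Ω → E}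

theorem ae_tendsto_sum_comp_div (hindep : iIndepFun e μ)
    (hident : ∀ m, IdentDistrib (e m) (e 0) μ μ) {g : E → ℝ} (hg : Measurable g)
    (hint : Integrable (g ∘ e 0) μ) {ι : ℕ → ℕ} (hι : Function.Injective ι) :
    ∀ᵐ ω ∂μ, Tendsto (fun n : ℕ => (∑ k ∈ Finset.range n, g (e (ι k) ω)) / n) atTop
      (𝓝 (∫ ω, g (e 0 ω) ∂μ)) := by
  have hidentY : ∀ k, IdentDistrib (g ∘ e (ι k)) (g ∘ e 0) μ μ :=
    fun k => (hident (ι k)).comp hg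
  exact (hidentY 0).integral_eq ▸ strong_law_ae_real (fun k => g ∘ e (ι k))
    ((hidentY 0).integrable_iff.2 hint)
    (fun i j hij => (hindep.indepFun (hι.ne hij)).comp hg hg)
    (fun k => (hidentY k).trans (hidentY 0).symm)

theorem ae_tendsto_comp_div_add_one (hindep : iIndepFun e μ)
    (hident : ∀ m, IdentDistrib (e m) (e 0) μ μ) {g : E → ℝ} (hg : Measurable g)
    (hint : Integrable (g ∘ e 0) μ) {ι : ℕ → ℕ} (hι : Function.Injective ι) :
    ∀ᵐ ω ∂μ, Tendsto (fun n : ℕ => g (e (ι n) ω) / (n + 1)) atTop (𝓝 0) := by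
  filter_upwards [ae_tendsto_sum_comp_div hindep hident hg hint hι] with ω hω
  exact tendsto_div_add_one_of_tendsto_sum_div hω

theorem ae_tendsto_sum_periodic_div (hindep : iIndepFun e μ)
    (hident : ∀ m, IdentDistrib (e m) (e 0) μ μ) {s : ℕ} (hs : 0 < s) {ℓ : ℕ → E → ℝ}
    (hper : Function.Periodic ℓ s) (hmeas : ∀ v, Measurable (ℓ v))
    (hint : ∀ v < s, Integrable (ℓ v ∘ e 0) μ) :
    ∀ᵐ ω ∂μ, Tendsto (fun t : ℕ => (∑ m ∈ Finset.range (t * s), ℓ m (e m ω)) / t) atTop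
      (𝓝 (∑ v ∈ Finset.range s, ∫ ω, ℓ v (e 0 ω) ∂μ)) := by
  have hseason : ∀ v < s, ∀ᵐ ω ∂μ, Tendsto
      (fun t : ℕ => (∑ k ∈ Finset.range t, ℓ v (e (k * s + v) ω)) / t) atTop
      (𝓝 (∫ ω, ℓ v (e 0 ω) ∂μ)) := fun v hv =>
    ae_tendsto_sum_comp_div hindep hident (hmeas v) (hint v hv)
      ((add_left_injective v).comp (mul_left_injective₀ hs.ne'))
  filter_upwards [(eventually_all_finset _).2 fun v hv => hseason v (Finset.mem_range.1 hv)]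
    with ω hω
  refine (tendsto_finsetSum _ hω).congr fun t => ?_
  rw [sum_range_mul_eq_sum_sum, Finset.sum_div]
  refine Finset.sum_congr rfl fun v _ => congrArg (· / (t : ℝ)) ?_
  exact Finset.sum_congr rfl fun k _ => by
    rw [add_comm]; exact congrFun (hper.nat_mul k v).symm _

end IID

lemma linfty_opNorm_fin_two (M : Matrix (Fin 2) (Fin 2) ℝ) :
    ‖M‖ = max (|M 0 0| + |M 0 1|) (|M 1 0| + |M 1 1|) := by
  rw [Matrix.linfty_opNorm_def, show (Finset.univ : Finset (Fin 2)) = {0, 1} from rfl,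
    Finset.sup_insert, Finset.sup_singleton]
  simp [Real.norm_eq_abs]

lemma phiM_mul_phiM (α β : ℕ → ℝ) (v w : ℕ) (x y : ℝ) :
    phiM α β v x * phiM α β w y = (y * α v + β v) • phiM α β w x := by
  ext i j
  fin_cases i <;> fin_cases j <;> simp [phiM, Matrix.mul_apply, Fin.sum_univ_two] <;> ring

lemma norm_smul_phiM (α β : ℕ → ℝ) (v : ℕ) (c x : ℝ) :
    ‖c • phiM α β v x‖ = |c| * (|α v| + |β v|) * max |x| 1 := by
  rw [linfty_opNorm_fin_two, mul_max_of_nonneg _ _ (by positivity), mul_one]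
  simp only [phiM, Matrix.smul_of, Matrix.of_apply, Matrix.smul_cons, Matrix.smul_empty,
    smul_eq_mul, Matrix.cons_val', Matrix.cons_val_zero, Matrix.cons_val_one, Matrix.empty_val',
    Matrix.cons_val_fin_one, abs_mul]
  congr 1 <;> ring

lemma list_prod_phiM (α β : ℕ → ℝ) (σ : ℕ → ℕ) (x : ℕ → ℝ) (n : ℕ) :
    (((List.range (n + 1)).reverse).map fun m => phiM α β (σ m) (x m)).prod
      = (∏ m ∈ Finset.range n, (x m * α (σ (m + 1)) + β (σ (m + 1)))) • phiM α β (σ 0) (x n) := by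
  induction n with
  | zero => simp
  | succ n ih =>
    rw [List.range_succ, List.reverse_append, List.map_append, List.prod_append, ih]
    simp only [List.reverse_singleton, List.map_cons, List.map_nil, List.prod_cons,
      List.prod_nil, mul_one]
    rw [Matrix.mul_smul, phiM_mul_phiM, smul_smul, Finset.prod_range_succ, mul_comm]

/-- `log ‖Φ_t‖` minus the seasonal sum over `m < ts`, as a function of the last innovation. -/
noncomputable def boundaryLog (α β : ℕ → ℝ) (x : ℝ) : ℝ :=
  Real.log (|α 0| + |β 0|) + Real.log (max |x| 1) - Real.log (x * α 0 + β 0)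

lemma log_norm_PhiProd {Ω : Type*} {s t : ℕ} (hs : 0 < s) (ht : 0 < t) {α β : ℕ → ℝ}
    (hαβ : 0 < |α 0| + |β 0|) {e : ℕ → Ω → ℝ} {ω : Ω}
    (hfac : ∀ m, 0 < e m ω * α ((m + 1) % s) + β ((m + 1) % s)) :
    Real.log ‖PhiProd s α β e t ω‖
      = ∑ m ∈ Finset.range (t * s), Real.log (e m ω * α ((m + 1) % s) + β ((m + 1) % s))
        + boundaryLog α β (e (t * s - 1) ω) := by
  obtain ⟨n, hn⟩ : ∃ n, t * s = n + 1 := Nat.exists_eq_add_one.2 (Nat.mul_pos ht hs)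
  have hC : 0 < ∏ m ∈ Finset.range n, (e m ω * α ((m + 1) % s) + β ((m + 1) % s)) :=
    Finset.prod_pos fun m _ => hfac m
  have hlast : (n + 1) % s = 0 := hn ▸ Nat.mul_mod_left t s
  rw [PhiProd, hn, list_prod_phiM, Nat.zero_mod, norm_smul_phiM, abs_of_pos hC,
    Real.log_mul (mul_pos hC hαβ).ne' (by positivity),
    Real.log_mul hC.ne' hαβ.ne', Real.log_prod fun m _ => (hfac m).ne', Nat.add_sub_cancel,
    Finset.sum_range_succ, hlast, boundaryLog]
  ring

lemma integrable_log_max_abs_one {Ω : Type*} [MeasurableSpace Ω] {μ : Measure Ω}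
    {X : Ω → ℝ} (hX : Integrable X μ) : Integrable (fun ω => Real.log (max |X ω| 1)) μ := by
  refine hX.norm.mono' (hX.aemeasurable.abs.max aemeasurable_const).log.aestronglyMeasurable
    (ae_of_all _ fun ω => ?_)
  have hone : 1 ≤ max |X ω| 1 := le_max_right _ _
  rw [Real.norm_eq_abs, abs_of_nonneg (Real.log_nonneg hone), Real.norm_eq_abs]
  linarith [Real.log_le_sub_one_of_pos (zero_lt_one.trans_le hone),
    max_le (le_add_of_nonneg_right zero_le_one) (le_add_of_nonneg_left (abs_nonneg (X ω)))]

end PGARCH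

open PGARCH in
theorem stmt12_general {Ω : Type*} [MeasurableSpace Ω] (μ : Measure Ω) [IsProbabilityMeasure μ]
    (s : ℕ) (hs : 0 < s) (α β : ℕ → ℝ)
    (hnz : ∀ v < s, 0 < α v + β v)
    (e : ℕ → Ω → ℝ)
    (hmeas : ∀ m, Measurable (e m))
    (hindep : iIndepFun e μ)
    (hident : ∀ m, Measure.map (e m) μ = Measure.map (e 0) μ)
    (hint : Integrable (e 0) μ)
    (hlogpos : ∀ m, ∀ v < s, ∀ᵐ ω ∂μ, 0 < e m ω * α v + β v)
    (hlogint : ∀ v < s, Integrable (fun ω => Real.log (e 0 ω * α v + β v)) μ)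
    (hlyap : ∑ v ∈ Finset.range s, ∫ ω, Real.log (e 0 ω * α v + β v) ∂μ < 0) :
    ∃ γ : ℝ, γ < 0 ∧
      ∀ᵐ ω ∂μ, Tendsto (fun t : ℕ => (1 / (t : ℝ)) * Real.log ‖PhiProd s α β e t ω‖)
        atTop (𝓝 γ) := by
  have hiid : ∀ m, IdentDistrib (e m) (e 0) μ μ :=
    fun m => ⟨(hmeas m).aemeasurable, (hmeas 0).aemeasurable, hident m⟩
  have hαβ : 0 < |α 0| + |β 0| :=
    (hnz 0 hs).trans_le (add_le_add (le_abs_self _) (le_abs_self _))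
  set ℓ : ℕ → ℝ → ℝ := fun m x => Real.log (x * α ((m + 1) % s) + β ((m + 1) % s))
  have hℓper : Function.Periodic ℓ s := fun m => by
    simp only [ℓ, Nat.add_right_comm m s 1, Nat.add_mod_right]
  have hsum := ae_tendsto_sum_periodic_div hindep hiid hs hℓper (fun v => by fun_prop)
    (fun v _ => hlogint _ (Nat.mod_lt _ hs))
  have hbd := ae_tendsto_comp_div_add_one hindep hiid (g := boundaryLog α β)
    (by unfold boundaryLog; fun_prop)
    (((integrable_const _).add (integrable_log_max_abs_one hint)).sub (hlogint 0 hs))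
    (ι := fun n => n * s + (s - 1)) ((add_left_injective _).comp (mul_left_injective₀ hs.ne'))
  refine ⟨_, hlyap, ?_⟩
  have hfac : ∀ᵐ ω ∂μ, ∀ m, 0 < e m ω * α ((m + 1) % s) + β ((m + 1) % s) :=
    ae_all_iff.2 fun m => hlogpos m _ (Nat.mod_lt _ hs)
  filter_upwards [hsum, hbd, hfac] with ω hsumω hbdω hfacω
  rw [sum_range_mod_add_one (fun v => ∫ ω, Real.log (e 0 ω * α v + β v) ∂μ) s] at hsumω
  have hbdω' : Tendsto (fun t : ℕ => boundaryLog α β (e (t * s - 1) ω) / t) atTop (𝓝 0) := by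
    refine (tendsto_add_atTop_iff_nat 1).1 (hbdω.congr fun n => ?_)
    rw [Nat.cast_add_one, add_one_mul, Nat.add_sub_assoc hs]
  have hlim := hsumω.add hbdω'
  rw [add_zero] at hlim
  refine hlim.congr' ?_
  filter_upwards [eventually_gt_atTop 0] with t ht
  rw [log_norm_PhiProd hs ht hαβ hfacω]
  ring

/-- **Strict stationarity of PGARCH(1,1).** Let `(e_m)` be i.i.d. nonnegative
innovations with mean `1`, and `α₁(v), β₁(v) ≥ 0` with `α₁(v) + β₁(v) > 0` and
`log (e α₁(v) + β₁(v))` integrable (and `e α₁(v) + β₁(v) > 0` a.s.) for each season.  If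
`∑_{v=1}^s E[log (e₀ α₁(v) + β₁(v))] < 0`, then the top Lyapunov exponent of the sequence of
period-products of the companion matrices is strictly negative:
`(1/t) log ‖∏_{i=1}^t Φ(η̄_{t-i})‖ → γ < 0` almost surely. -/
theorem stmt12 {Ω : Type*} [MeasurableSpace Ω] (μ : Measure Ω) [IsProbabilityMeasure μ]
    (s : ℕ) (hs : 0 < s) (α β : ℕ → ℝ)
    (hα : ∀ v < s, 0 ≤ α v) (hβ : ∀ v < s, 0 ≤ β v)
    (hnz : ∀ v < s, 0 < α v + β v)
    (e : ℕ → Ω → ℝ)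
    (hmeas : ∀ m, Measurable (e m))
    (hindep : iIndepFun e μ)
    (hident : ∀ m, Measure.map (e m) μ = Measure.map (e 0) μ)
    (hpos : ∀ m, ∀ᵐ ω ∂μ, 0 ≤ e m ω)
    (hint : Integrable (e 0) μ) (hmean : ∫ ω, e 0 ω ∂μ = 1)
    (hlogpos : ∀ m, ∀ v < s, ∀ᵐ ω ∂μ, 0 < e m ω * α v + β v)
    (hlogint : ∀ v < s, Integrable (fun ω => Real.log (e 0 ω * α v + β v)) μ)
    (hlyap : ∑ v ∈ Finset.range s, ∫ ω, Real.log (e 0 ω * α v + β v) ∂μ < 0) :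
    ∃ γ : ℝ, γ < 0 ∧
      ∀ᵐ ω ∂μ, Tendsto (fun t : ℕ => (1 / (t : ℝ)) * Real.log ‖PhiProd s α β e t ω‖)
        atTop (𝓝 γ) :=
  stmt12_general μ s hs α β hnz e hmeas hindep hident hint hlogpos hlogint hlyap
end

section
/- (Second-order stationarity of PGARCH(1,1)) With $\theta_1(v) = \alpha_1(v)+\beta_1(v)$ for $v=1,\dots,s$, all nonnegative, the condition $\prod_{v=1}^{s}\theta_1(v) < 1$ is equivalent to the spectral-radius condition $\rho\left(\prod_{v=1}^s \phi_v\right)<1$, where $\phi_v = \begin{pmatrix}\alpha_1(v) & \beta_1(v)\\ \alpha_1(v) & \beta_1(v)\end{pmatrix}$. In particular the nonzero eigenvalue of each rank-one matrix product $\prod_{v=1}^s \phi_v$ equals $\prod_{v=1}^s\theta_1(v)$. -/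
/-!
Each `φ v = 1 ⬝ wᵥᵀ` is rank one, so products telescope through the inner products
`wᵥ ⬝ᵥ 1 = θ v`: `φ (s-1) ⋯ φ 0 = (∏_{v ≥ 1} θ v) • 1 ⬝ w₀ᵀ`. The product therefore has
determinant `0` and trace `∏ θ v`, so its eigenvalues are `0` and `∏ θ v ≥ 0`.
-/

open Matrix

namespace Matrix

variable {n : Type*} [Fintype n] [DecidableEq n]

theorem prod_map_vecMulVec_concat {R : Type*} [CommSemiring R] (u w : n → R)
    (ws : List (n → R)) :
    ((ws ++ [w]).map (vecMulVec u)).prod = (ws.map (· ⬝ᵥ u)).prod • vecMulVec u w := by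
  induction ws with
  | nil => simp
  | cons w' ws ih =>
    rw [List.cons_append, List.map_cons, List.prod_cons, ih, Matrix.mul_smul,
      vecMulVec_mul_vecMulVec, vecMulVec_smul, smul_smul, List.map_cons, List.prod_cons, mul_comm]

theorem trace_prod_map_vecMulVec {R : Type*} [CommSemiring R] (u : n → R) {ws : List (n → R)}
    (hws : ws ≠ []) :
    trace (ws.map (vecMulVec u)).prod = (ws.map (· ⬝ᵥ u)).prod := by
  obtain ⟨ws, w, rfl⟩ := (List.eq_nil_or_concat' _).resolve_left hws
  rw [prod_map_vecMulVec_concat, trace_smul, trace_vecMulVec, smul_eq_mul,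
    List.map_append, List.prod_append, List.map_singleton, List.prod_singleton, dotProduct_comm]

theorem det_prod_map_vecMulVec {R : Type*} [CommRing R] [Nontrivial n]
    (u : n → R) {ws : List (n → R)} (hws : ws ≠ []) :
    det (ws.map (vecMulVec u)).prod = 0 := by
  obtain ⟨ws, w, rfl⟩ := (List.eq_nil_or_concat' _).resolve_left hws
  rw [prod_map_vecMulVec_concat, det_smul, det_vecMulVec, mul_zero]

theorem mem_spectrum_map_iff_of_fin_two {K L : Type*} [Field K] [Field L] [Algebra K L]
    (M : Matrix (Fin 2) (Fin 2) K) (z : L) :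
    z ∈ spectrum L (M.map (algebraMap K L)) ↔
      z ^ 2 - algebraMap K L M.trace * z + algebraMap K L M.det = 0 := by
  rw [mem_spectrum_iff_isRoot_charpoly, charpoly_map, Polynomial.IsRoot, Polynomial.eval_map,
    ← Polynomial.eval_map, charpoly_fin_two]
  simp

theorem fin_two_of_same_rows_eq_vecMulVec {R : Type*} [MulOneClass R] (a b : R) :
    !![a, b; a, b] = vecMulVec 1 ![a, b] := by
  ext i j
  fin_cases i <;> fin_cases j <;> simp [vecMulVec_apply]

end Matrix

theorem List.prod_map_reverse_range {M : Type*} [CommMonoid M] (s : ℕ) (f : ℕ → M) :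
    ((List.range s).reverse.map f).prod = ∏ v ∈ Finset.range s, f v := by
  rw [List.map_reverse, List.prod_reverse, Finset.prod_eq_multiset_prod, Finset.range_val,
    Multiset.range, Multiset.map_coe, Multiset.prod_coe]

/-- With `θ₁(v) = α₁(v) + β₁(v) ≥ 0` and
`φ_v = ![![α₁(v), β₁(v)], ![α₁(v), β₁(v)]]`, the ordered product `P = φ_s ⋯ φ_1`
(highest index on the left, `0`-indexed) has `∏_v θ₁(v)` as an eigenvalue, every nonzero
eigenvalue of `P` equals `∏_v θ₁(v)`, and `∏_v θ₁(v) < 1` iff every eigenvalue of `P` has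
modulus `< 1` (i.e. `ρ(P) < 1`). -/
theorem stmt13 {s : ℕ} (hs : 0 < s) (α β : ℕ → ℝ) (hα : ∀ v, 0 ≤ α v) (hβ : ∀ v, 0 ≤ β v)
    (θ : ℕ → ℝ) (hθ : ∀ v, θ v = α v + β v)
    (φ : ℕ → Matrix (Fin 2) (Fin 2) ℝ) (hφ : ∀ v, φ v = !![α v, β v; α v, β v])
    (P : Matrix (Fin 2) (Fin 2) ℝ)
    (hP : P = (((List.range s).reverse).map φ).prod) :
    (((∏ v ∈ Finset.range s, θ v : ℝ) : ℂ) ∈ spectrum ℂ (P.map (algebraMap ℝ ℂ))) ∧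
    (∀ z ∈ spectrum ℂ (P.map (algebraMap ℝ ℂ)), z ≠ 0 →
      z = ((∏ v ∈ Finset.range s, θ v : ℝ) : ℂ)) ∧
    ((∏ v ∈ Finset.range s, θ v) < 1 ↔
      ∀ z ∈ spectrum ℂ (P.map (algebraMap ℝ ℂ)), ‖z‖ < 1) := by
  set t := ∏ v ∈ Finset.range s, θ v
  set ws := (List.range s).reverse.map fun v => ![α v, β v]
  have hws : ws ≠ [] := by simp [ws, hs.ne']
  have hPws : P = (ws.map (vecMulVec 1)).prod := by
    simp only [hP, ws, List.map_map]
    congr 1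
    exact List.map_congr_left fun v _ => (hφ v).trans (fin_two_of_same_rows_eq_vecMulVec _ _)
  have htrace : P.trace = t := by
    rw [hPws, trace_prod_map_vecMulVec _ hws, List.map_map, List.prod_map_reverse_range]
    exact Finset.prod_congr rfl fun v _ => by simp [dotProduct, Fin.sum_univ_two, hθ]
  have hdet : P.det = 0 := by rw [hPws, det_prod_map_vecMulVec _ hws]
  have hspec : ∀ z, z ∈ spectrum ℂ (P.map (algebraMap ℝ ℂ)) ↔ z = 0 ∨ z = t := fun z => by
    rw [mem_spectrum_map_iff_of_fin_two, htrace, hdet, map_zero, add_zero,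
      show z ^ 2 - algebraMap ℝ ℂ t * z = z * (z - t) by simp; ring, mul_eq_zero, sub_eq_zero]
  have hnorm : ‖(t : ℂ)‖ = t :=
    Complex.norm_of_nonneg (Finset.prod_nonneg fun v _ => hθ v ▸ add_nonneg (hα v) (hβ v))
  refine ⟨(hspec _).2 (Or.inr rfl), fun z hz hz0 => ((hspec z).1 hz).resolve_left hz0,
    fun ht z hz => ?_, fun h => hnorm ▸ h _ ((hspec _).2 (Or.inr rfl))⟩
  rcases (hspec z).1 hz with rfl | rfl
  · simp
  · rwa [hnorm]
end
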